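/- arXiv:2006.12101 — 5 statements merged into one kernel-verified Lean document; each statement's English description precedes it below -/
import Mathlib

section
/- Additivity of Rényi divergence under products (composition theorem of Rényi differential privacy, Theorem 1 of the paper, stated at the level of output distributions): Let μ₁, ν₁ be probability measures on a measurable space Z₁ and μ₂, ν₂ be probability measures on a measurable space Z₂, and let α > 1. If D_α(μ₁ ‖ ν₁) ≤ ε₁ and D_α(μ₂ ‖ ν₂) ≤ ε₂, then the product measures satisfy D_α(μ₁ ⊗ μ₂ ‖ ν₁ ⊗ ν₂) ≤ ε₁ + ε₂. -/
open MeasureTheory Classical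

/-- The Rényi divergence of order `α` between two measures: `(α-1)⁻¹ · log ∫ (dμ/dν)^α dν`
when `μ ≪ ν`, and `⊤` otherwise. -/
noncomputable def renyiDiv {Z : Type*} [MeasurableSpace Z] (α : ℝ) (μ ν : Measure Z) : EReal :=
  if μ ≪ ν then (((α - 1)⁻¹ : ℝ) : EReal) * ENNReal.log (∫⁻ z, (μ.rnDeriv ν z) ^ α ∂ν)
  else ⊤

/-! The density of `μ₁ ⊗ μ₂` with respect to `ν₁ ⊗ ν₂` is `(x, y) ↦ (dμ₁/dν₁)(x) · (dμ₂/dν₂)(y)`,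
so the integral `∫ (dμ/dν)^α dν` is multiplicative under products, and its logarithm additive.
The factor `(α - 1)⁻¹` is nonnegative, so it distributes over this sum even when the summands
take the values `±∞` in `EReal`. -/

lemma absolutelyContinuous_of_renyiDiv_ne_top {Z : Type*} [MeasurableSpace Z] {α : ℝ}
    {μ ν : Measure Z} (h : renyiDiv α μ ν ≠ ⊤) : μ ≪ ν := by
  by_contra hac
  exact h (if_neg hac)

section Prod

variable {Z₁ Z₂ : Type*} [MeasurableSpace Z₁] [MeasurableSpace Z₂]
  {μ₁ ν₁ : Measure Z₁} {μ₂ ν₂ : Measure Z₂}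
  [SigmaFinite μ₁] [SigmaFinite ν₁] [SigmaFinite μ₂] [SigmaFinite ν₂]

lemma Measure.rnDeriv_prod_ae (h₁ : μ₁ ≪ ν₁) (h₂ : μ₂ ≪ ν₂) :
    (μ₁.prod μ₂).rnDeriv (ν₁.prod ν₂) =ᵐ[ν₁.prod ν₂]
      fun z ↦ μ₁.rnDeriv ν₁ z.1 * μ₂.rnDeriv ν₂ z.2 := by
  conv_lhs => rw [← μ₁.withDensity_rnDeriv_eq ν₁ h₁, ← μ₂.withDensity_rnDeriv_eq ν₂ h₂,
    prod_withDensity (μ₁.measurable_rnDeriv ν₁) (μ₂.measurable_rnDeriv ν₂)]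
  exact Measure.rnDeriv_withDensity _ (by fun_prop)

lemma lintegral_rnDeriv_prod_rpow (h₁ : μ₁ ≪ ν₁) (h₂ : μ₂ ≪ ν₂) {α : ℝ} (hα : 0 ≤ α) :
    ∫⁻ z, (μ₁.prod μ₂).rnDeriv (ν₁.prod ν₂) z ^ α ∂(ν₁.prod ν₂) =
      (∫⁻ x, μ₁.rnDeriv ν₁ x ^ α ∂ν₁) * ∫⁻ y, μ₂.rnDeriv ν₂ y ^ α ∂ν₂ := by
  calc _ = ∫⁻ z, μ₁.rnDeriv ν₁ z.1 ^ α * μ₂.rnDeriv ν₂ z.2 ^ α ∂(ν₁.prod ν₂) := by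
        refine lintegral_congr_ae ?_
        filter_upwards [Measure.rnDeriv_prod_ae h₁ h₂] with z hz
        rw [hz, ENNReal.mul_rpow_of_nonneg _ _ hα]
    _ = _ := lintegral_prod_mul ((μ₁.measurable_rnDeriv ν₁).pow_const α).aemeasurable
          ((μ₂.measurable_rnDeriv ν₂).pow_const α).aemeasurable

lemma renyiDiv_prod {α : ℝ} (hα : 1 ≤ α) (h₁ : μ₁ ≪ ν₁) (h₂ : μ₂ ≪ ν₂) :
    renyiDiv α (μ₁.prod μ₂) (ν₁.prod ν₂) = renyiDiv α μ₁ ν₁ + renyiDiv α μ₂ ν₂ := by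
  rw [renyiDiv, if_pos (h₁.prod h₂), renyiDiv, if_pos h₁, renyiDiv, if_pos h₂,
    lintegral_rnDeriv_prod_rpow h₁ h₂ (by linarith), ENNReal.log_mul_add]
  have hc : (0 : EReal) ≤ ((α - 1)⁻¹ : ℝ) := by
    exact_mod_cast inv_nonneg.2 (sub_nonneg.2 hα)
  exact EReal.left_distrib_of_nonneg_of_ne_top hc (EReal.coe_ne_top _) _ _

end Prod

theorem renyiDiv_prod_le {Z₁ Z₂ : Type*} [MeasurableSpace Z₁] [MeasurableSpace Z₂]
    (μ₁ ν₁ : Measure Z₁) (μ₂ ν₂ : Measure Z₂)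
    [IsProbabilityMeasure μ₁] [IsProbabilityMeasure ν₁]
    [IsProbabilityMeasure μ₂] [IsProbabilityMeasure ν₂]
    {α ε₁ ε₂ : ℝ} (hα : 1 < α)
    (h₁ : renyiDiv α μ₁ ν₁ ≤ (ε₁ : EReal))
    (h₂ : renyiDiv α μ₂ ν₂ ≤ (ε₂ : EReal)) :
    renyiDiv α (μ₁.prod μ₂) (ν₁.prod ν₂) ≤ ((ε₁ + ε₂ : ℝ) : EReal) := by
  have hac₁ :=
    absolutelyContinuous_of_renyiDiv_ne_top (ne_top_of_le_ne_top (EReal.coe_ne_top _) h₁)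
  have hac₂ :=
    absolutelyContinuous_of_renyiDiv_ne_top (ne_top_of_le_ne_top (EReal.coe_ne_top _) h₂)
  rw [renyiDiv_prod hα.le hac₁ hac₂, EReal.coe_add]
  exact add_le_add h₁ h₂
end

section
/- Adaptive composition bound for Rényi divergence (chain rule used in composing differentially private mechanisms): Let μ, ν be probability measures on a measurable space Z₁, let κ, η be Markov (probability) kernels from Z₁ to a measurable space Z₂, and let α > 1. If D_α(μ ‖ ν) ≤ ε₁ and D_α(κ(z) ‖ η(z)) ≤ ε₂ for every z ∈ Z₁, then the composed measures on Z₁ × Z₂ satisfy D_α(μ ⊗ κ ‖ ν ⊗ η) ≤ ε₁ + ε₂, where μ ⊗ κ denotes the measure obtained by sampling z ∼ μ and then w ∼ κ(z). -/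
/-!
Write `H_α(p, q) = ∫ (dp/dq)^α dq` for the Hellinger integral, so that `D_α(p ‖ q) ≤ ε` iff
`p ≪ q` and `H_α(p, q) ≤ exp ((α - 1) ε)`. The reverse Hölder inequality
`(∫ a)^α (∫ b)^(1-α) ≤ ∫ a^α b^(1-α)` shows that `H_α(p, q)` dominates
`∑ p(B)^α q(B)^(1-α)` over every finite measurable partition, and conversely `H_α(p, q)` is
bounded by these sums over the partitions into fibres of simple functions.

For `E ⊆ Z₁ × Z₂`, Hölder in `z` bounds `(μ ⊗ κ)(E)^α (ν ⊗ η)(E)^(1-α)` by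
`∫ (dμ/dν)^α κ_z(E_z)^α η_z(E_z)^(1-α) dν`. Summing over a partition and applying the partition
bound in each fibre gives `H_α(μ ⊗ κ, ν ⊗ η) ≤ H_α(μ, ν) · sup_z H_α(κ_z, η_z)`. Working with
partitions avoids needing a version of `dκ_z/dη_z` that is jointly measurable in `(z, w)`.
-/

open MeasureTheory Classical

open scoped ENNReal

theorem lintegral_rpow_mul_rpow_le {W : Type*} [MeasurableSpace W] {ξ : Measure W} {α : ℝ}
    (hα : 1 < α) {a b : W → ℝ≥0∞} (ha : AEMeasurable a ξ) (hb : AEMeasurable b ξ)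
    (hab : ∀ᵐ w ∂ξ, b w = 0 → a w = 0) (hb_top : ∀ᵐ w ∂ξ, b w ≠ ∞) :
    (∫⁻ w, a w ∂ξ) ^ α * (∫⁻ w, b w ∂ξ) ^ (1 - α) ≤ ∫⁻ w, a w ^ α * b w ^ (1 - α) ∂ξ := by
  have hα₀ : 0 < α := by linarith
  set F := fun w => a w ^ α * b w ^ (1 - α)
  have ha_eq : a =ᵐ[ξ] fun w => F w ^ α⁻¹ * b w ^ (1 - α⁻¹) := by
    filter_upwards [hab, hb_top] with w hab hb_top
    rcases eq_or_ne (b w) 0 with hb0 | hb0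
    · simp [F, hb0, hab hb0, hα₀, ENNReal.zero_rpow_of_pos]
    · have : (1 - α) * α⁻¹ + (1 - α⁻¹) = 0 := by field_simp; ring
      rw [ENNReal.mul_rpow_of_nonneg _ _ (inv_nonneg.2 hα₀.le), ENNReal.rpow_rpow_inv hα₀.ne',
        ← ENNReal.rpow_mul, mul_assoc, ← ENNReal.rpow_add _ _ hb0 hb_top, this,
        ENNReal.rpow_zero, mul_one]
  have holder : ∫⁻ w, a w ∂ξ ≤ (∫⁻ w, F w ∂ξ) ^ α⁻¹ * (∫⁻ w, b w ∂ξ) ^ (1 - α⁻¹) :=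
    (lintegral_congr_ae ha_eq).trans_le <| ENNReal.lintegral_mul_norm_pow_le
      ((ha.pow_const α).mul (hb.pow_const _)) hb (inv_nonneg.2 hα₀.le)
      (sub_nonneg.2 (inv_le_one_of_one_le₀ hα.le)) (by ring)
  set B := ∫⁻ w, b w ∂ξ
  calc (∫⁻ w, a w ∂ξ) ^ α * B ^ (1 - α)
      ≤ ((∫⁻ w, F w ∂ξ) ^ α⁻¹ * B ^ (1 - α⁻¹)) ^ α * B ^ (1 - α) := by gcongr
    _ = (∫⁻ w, F w ∂ξ) * (B ^ (α - 1) * (B ^ (α - 1))⁻¹) := by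
      rw [ENNReal.mul_rpow_of_nonneg _ _ hα₀.le, ENNReal.rpow_inv_rpow hα₀.ne', ← ENNReal.rpow_mul,
        mul_assoc, ← ENNReal.rpow_neg, neg_sub, sub_mul, one_mul, inv_mul_cancel₀ hα₀.ne']
    _ ≤ ∫⁻ w, F w ∂ξ := mul_le_of_le_one_right' (ENNReal.mul_inv_le_one _)

noncomputable def hellingerIntegral {Z : Type*} [MeasurableSpace Z] (α : ℝ) (μ ν : Measure Z) :
    ℝ≥0∞ :=
  ∫⁻ z, μ.rnDeriv ν z ^ α ∂ν

theorem renyiDiv_le_coe_iff {Z : Type*} [MeasurableSpace Z] {μ ν : Measure Z} {α ε : ℝ}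
    (hα : 1 < α) :
    renyiDiv α μ ν ≤ ε ↔
      μ ≪ ν ∧ hellingerIntegral α μ ν ≤ ENNReal.ofReal (Real.exp ((α - 1) * ε)) := by
  by_cases hμν : μ ≪ ν
  · have hα₁ : (0 : EReal) < ((α - 1 : ℝ) : EReal) := by exact_mod_cast sub_pos.2 hα
    have hlog : (((α - 1) * ε : ℝ) : EReal) = ENNReal.log (.ofReal (Real.exp ((α - 1) * ε))) := by
      rw [ENNReal.log_ofReal_of_pos (Real.exp_pos _), Real.log_exp]
    rw [renyiDiv, if_pos hμν, EReal.coe_inv, mul_comm, ← div_eq_mul_inv,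
      EReal.div_le_iff_le_mul hα₁ (EReal.coe_ne_top _), ← EReal.coe_mul, hlog,
      ENNReal.log_le_log_iff, hellingerIntegral]
    exact (and_iff_right hμν).symm
  · simp [renyiDiv, hμν]

section Partition

variable {Z : Type*} [MeasurableSpace Z] {p q : Measure Z} {α : ℝ}

theorem rpow_mul_rpow_le_setLIntegral_rnDeriv_rpow [p.HaveLebesgueDecomposition q] (hpq : p ≪ q)
    (hα : 1 < α) {B : Set Z} (hB : MeasurableSet B) :
    p B ^ α * q B ^ (1 - α) ≤ ∫⁻ x in B, p.rnDeriv q x ^ α ∂q := by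
  simpa [Measure.setLIntegral_rnDeriv' hpq hB] using
    lintegral_rpow_mul_rpow_le (ξ := q.restrict B) (b := 1) hα
      (p.measurable_rnDeriv q).aemeasurable aemeasurable_const (by simp) (by simp)

theorem sum_rpow_mul_rpow_le_hellingerIntegral [p.HaveLebesgueDecomposition q] (hpq : p ≪ q)
    (hα : 1 < α) {ι : Type*} (t : Finset ι) {B : ι → Set Z} (hB : ∀ i ∈ t, MeasurableSet (B i))
    (hdisj : Set.PairwiseDisjoint ↑t B) :
    ∑ i ∈ t, p (B i) ^ α * q (B i) ^ (1 - α) ≤ hellingerIntegral α p q :=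
  calc ∑ i ∈ t, p (B i) ^ α * q (B i) ^ (1 - α)
      ≤ ∑ i ∈ t, ∫⁻ x in B i, p.rnDeriv q x ^ α ∂q :=
        Finset.sum_le_sum fun i hi => rpow_mul_rpow_le_setLIntegral_rnDeriv_rpow hpq hα (hB i hi)
    _ = ∫⁻ x in ⋃ i ∈ t, B i, p.rnDeriv q x ^ α ∂q := (lintegral_biUnion_finset hdisj hB _).symm
    _ ≤ hellingerIntegral α p q := setLIntegral_le_lintegral _ _

theorem hellingerIntegral_le_of_forall_simpleFunc [IsFiniteMeasure q] (hα : 1 < α) {C : ℝ≥0∞}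
    (h : ∀ s : SimpleFunc Z ℝ≥0∞,
      ∑ c ∈ s.range, p (s ⁻¹' {c}) ^ α * q (s ⁻¹' {c}) ^ (1 - α) ≤ C) :
    hellingerIntegral α p q ≤ C := by
  have hα₀ : 0 < α := by linarith
  rw [hellingerIntegral, lintegral_def]
  refine iSup₂_le fun s hs => (Finset.sum_le_sum fun c _ => ?_).trans (h s)
  set A := s ⁻¹' {c}
  have hc : c ^ α⁻¹ * q A ≤ p A :=
    calc c ^ α⁻¹ * q A = ∫⁻ _ in A, c ^ α⁻¹ ∂q := (setLIntegral_const _ _).symm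
      _ ≤ ∫⁻ x in A, p.rnDeriv q x ∂q :=
        setLIntegral_mono (p.measurable_rnDeriv q) fun x (hx : s x = c) =>
          (ENNReal.rpow_inv_le_iff hα₀).2 (hx ▸ hs x)
      _ ≤ p A := Measure.setLIntegral_rnDeriv_le A
  rcases eq_or_ne (q A) 0 with hA | hA
  · simp [hA]
  calc c * q A = (c ^ α⁻¹ * q A) ^ α * q A ^ (1 - α) := by
        rw [ENNReal.mul_rpow_of_nonneg _ _ hα₀.le, ENNReal.rpow_inv_rpow hα₀.ne', mul_assoc,
          ← ENNReal.rpow_add _ _ hA (measure_ne_top q A), add_sub_cancel, ENNReal.rpow_one]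
    _ ≤ p A ^ α * q A ^ (1 - α) := by gcongr

end Partition

section CompProd

open ProbabilityTheory

variable {Z₁ Z₂ : Type*} [MeasurableSpace Z₁] [MeasurableSpace Z₂] {μ ν : Measure Z₁}
  {κ η : Kernel Z₁ Z₂} {α : ℝ}

theorem compProd_rpow_mul_rpow_le [SFinite μ] [SFinite ν] [μ.HaveLebesgueDecomposition ν]
    [IsSFiniteKernel κ] [IsFiniteKernel η] (hμν : μ ≪ ν) (hκη : ∀ z, κ z ≪ η z) (hα : 1 < α)
    {E : Set (Z₁ × Z₂)} (hE : MeasurableSet E) :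
    (μ ⊗ₘ κ) E ^ α * (ν ⊗ₘ η) E ^ (1 - α) ≤ ∫⁻ z, μ.rnDeriv ν z ^ α *
      (κ z (Prod.mk z ⁻¹' E) ^ α * η z (Prod.mk z ⁻¹' E) ^ (1 - α)) ∂ν := by
  have hκE := Kernel.measurable_kernel_prodMk_left (κ := κ) hE
  have hηE := Kernel.measurable_kernel_prodMk_left (κ := η) hE
  have hμκ : (μ ⊗ₘ κ) E = ∫⁻ z, μ.rnDeriv ν z * κ z (Prod.mk z ⁻¹' E) ∂ν := by
    rw [Measure.compProd_apply hE]
    conv_lhs => rw [← Measure.withDensity_rnDeriv_eq μ ν hμν]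
    exact lintegral_withDensity_eq_lintegral_mul _ (μ.measurable_rnDeriv ν) hκE
  rw [hμκ, Measure.compProd_apply hE]
  refine (lintegral_rpow_mul_rpow_le hα ((μ.measurable_rnDeriv ν).mul hκE).aemeasurable
    hηE.aemeasurable (ae_of_all _ fun z h => by simp [hκη z h]) (ae_of_all _ fun z =>
    measure_ne_top _ _)).trans_eq (lintegral_congr fun z => ?_)
  rw [Pi.mul_apply, ENNReal.mul_rpow_of_nonneg _ _ (by linarith), mul_assoc]

theorem hellingerIntegral_compProd_le [SFinite μ] [μ.HaveLebesgueDecomposition ν]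
    [IsFiniteMeasure ν] [IsSFiniteKernel κ] [IsFiniteKernel η] (hμν : μ ≪ ν)
    (hκη : ∀ z, κ z ≪ η z) (hα : 1 < α) {C : ℝ≥0∞}
    (hC : ∀ z, hellingerIntegral α (κ z) (η z) ≤ C) :
    hellingerIntegral α (μ ⊗ₘ κ) (ν ⊗ₘ η) ≤ hellingerIntegral α μ ν * C := by
  refine hellingerIntegral_le_of_forall_simpleFunc hα fun s => ?_
  set A : ℝ≥0∞ → Set (Z₁ × Z₂) := fun c => s ⁻¹' {c}
  have hA (c : ℝ≥0∞) : MeasurableSet (A c) := s.measurableSet_fiber c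
  have hκA (c : ℝ≥0∞) := Kernel.measurable_kernel_prodMk_left (κ := κ) (hA c)
  have hηA (c : ℝ≥0∞) := Kernel.measurable_kernel_prodMk_left (κ := η) (hA c)
  calc ∑ c ∈ s.range, (μ ⊗ₘ κ) (A c) ^ α * (ν ⊗ₘ η) (A c) ^ (1 - α)
      ≤ ∑ c ∈ s.range, ∫⁻ z, μ.rnDeriv ν z ^ α *
          (κ z (Prod.mk z ⁻¹' A c) ^ α * η z (Prod.mk z ⁻¹' A c) ^ (1 - α)) ∂ν :=
        Finset.sum_le_sum fun c _ => compProd_rpow_mul_rpow_le hμν hκη hα (hA c)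
    _ = ∫⁻ z, μ.rnDeriv ν z ^ α * ∑ c ∈ s.range,
          κ z (Prod.mk z ⁻¹' A c) ^ α * η z (Prod.mk z ⁻¹' A c) ^ (1 - α) ∂ν := by
        simp_rw [Finset.mul_sum]
        exact (lintegral_finsetSum _ fun c _ => ((μ.measurable_rnDeriv ν).pow_const α).mul
          (((hκA c).pow_const α).mul ((hηA c).pow_const _))).symm
    _ ≤ ∫⁻ z, μ.rnDeriv ν z ^ α * C ∂ν := by
        refine lintegral_mono fun z => mul_le_mul_right ?_ _
        refine (sum_rpow_mul_rpow_le_hellingerIntegral (hκη z) hα s.range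
          (fun c _ => measurable_prodMk_left (hA c)) ?_).trans (hC z)
        exact fun c _ d _ hcd => ((Set.disjoint_singleton.2 hcd).preimage s).preimage _
    _ = hellingerIntegral α μ ν * C := lintegral_mul_const _ ((μ.measurable_rnDeriv ν).pow_const α)

end CompProd

open ProbabilityTheory

theorem renyiDiv_compProd_le {Z₁ Z₂ : Type*} [MeasurableSpace Z₁] [MeasurableSpace Z₂]
    (μ ν : Measure Z₁) (κ η : Kernel Z₁ Z₂)
    [IsProbabilityMeasure μ] [IsProbabilityMeasure ν]
    [IsMarkovKernel κ] [IsMarkovKernel η]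
    {α ε₁ ε₂ : ℝ} (hα : 1 < α)
    (h₁ : renyiDiv α μ ν ≤ (ε₁ : EReal))
    (h₂ : ∀ z : Z₁, renyiDiv α (κ z) (η z) ≤ (ε₂ : EReal)) :
    renyiDiv α (μ ⊗ₘ κ) (ν ⊗ₘ η) ≤ ((ε₁ + ε₂ : ℝ) : EReal) := by
  obtain ⟨hμν, hH₁⟩ := (renyiDiv_le_coe_iff hα).1 h₁
  choose hκη hH₂ using fun z => (renyiDiv_le_coe_iff hα).1 (h₂ z)
  refine (renyiDiv_le_coe_iff hα).2 ⟨hμν.compProd (ae_of_all _ hκη), ?_⟩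
  calc hellingerIntegral α (μ ⊗ₘ κ) (ν ⊗ₘ η)
      ≤ hellingerIntegral α μ ν * ENNReal.ofReal (Real.exp ((α - 1) * ε₂)) :=
        hellingerIntegral_compProd_le hμν hκη hα hH₂
    _ ≤ ENNReal.ofReal (Real.exp ((α - 1) * ε₁)) * ENNReal.ofReal (Real.exp ((α - 1) * ε₂)) := by
        gcongr
    _ = ENNReal.ofReal (Real.exp ((α - 1) * (ε₁ + ε₂))) := by
        rw [← ENNReal.ofReal_mul (Real.exp_pos _).le, ← Real.exp_add, mul_add]
end

section
/- Conversion from Rényi differential privacy to approximate differential privacy (Theorem 2 of the paper, stated at the level of output distributions): Let μ, ν be probability measures on a measurable space Z, let α > 1, ε ≥ 0, and 0 < δ < 1. If D_α(μ ‖ ν) ≤ ε, then for every measurable set S ⊆ Z, μ(S) ≤ exp(ε + log(1/δ)/(α−1)) · ν(S) + δ. -/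
/-! Split `S` along the level set `{dμ/dν > c}` for `c = exp (ε + log (1/δ) / (α - 1))`.
Below the level, `μ(S ∩ {dμ/dν ≤ c}) ≤ c · ν S`. Above it, Markov's inequality for the
`α`-th moment of `dμ/dν` gives `μ {dμ/dν > c} · c^(α-1) ≤ ∫ (dμ/dν)^α dν ≤ exp ((α-1) ε)`,
and `c` is chosen so that the right-hand side is exactly `δ · c^(α-1)`. -/

open MeasureTheory Classical

lemma lintegral_rnDeriv_rpow_le_of_renyiDiv_le {Z : Type*} [MeasurableSpace Z] {α ε : ℝ}
    {μ ν : Measure Z} (hα : 1 < α) (h : renyiDiv α μ ν ≤ ε) :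
    ∫⁻ z, μ.rnDeriv ν z ^ α ∂ν ≤ ENNReal.ofReal (Real.exp ((α - 1) * ε)) := by
  have hμν := absolutelyContinuous_of_renyiDiv_ne_top (ne_top_of_le_ne_top (EReal.coe_ne_top ε) h)
  have hα₁ : (0 : EReal) < ((α - 1 : ℝ) : EReal) := by exact_mod_cast sub_pos.mpr hα
  rw [renyiDiv, if_pos hμν, EReal.coe_inv, ← EReal.div_eq_inv_mul,
    EReal.div_le_iff_le_mul hα₁ (EReal.coe_ne_top _), ← EReal.coe_mul] at h
  rw [← ENNReal.exp_log (∫⁻ z, _ ∂ν), ← EReal.exp_coe]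
  exact EReal.exp_monotone h

lemma ENNReal.mul_rpow_sub_one_le_rpow {x c : ENNReal} {α : ℝ} (hα : 1 ≤ α) (hcx : c ≤ x) :
    x * c ^ (α - 1) ≤ x ^ α := calc
  x * c ^ (α - 1) ≤ x ^ (1 : ℝ) * x ^ (α - 1) := by
    rw [ENNReal.rpow_one]
    gcongr
  _ = x ^ α := by
    rw [← ENNReal.rpow_add_of_nonneg _ _ zero_le_one (by linarith), add_sub_cancel]

namespace MeasureTheory.Measure

variable {Z : Type*} [MeasurableSpace Z] {μ ν : Measure Z} [HaveLebesgueDecomposition μ ν]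

lemma measure_rnDeriv_gt_mul_rpow_le (hμν : μ ≪ ν) {α : ℝ} (hα : 1 ≤ α) (c : ENNReal) :
    μ {z | c < μ.rnDeriv ν z} * c ^ (α - 1) ≤ ∫⁻ z, μ.rnDeriv ν z ^ α ∂ν := by
  have hT : MeasurableSet {z | c < μ.rnDeriv ν z} := measurable_rnDeriv μ ν measurableSet_Ioi
  calc μ {z | c < μ.rnDeriv ν z} * c ^ (α - 1)
      = ∫⁻ z in {z | c < μ.rnDeriv ν z}, μ.rnDeriv ν z * c ^ (α - 1) ∂ν := by
        rw [lintegral_mul_const _ (measurable_rnDeriv μ ν), setLIntegral_rnDeriv' hμν hT]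
    _ ≤ ∫⁻ z in {z | c < μ.rnDeriv ν z}, μ.rnDeriv ν z ^ α ∂ν :=
        setLIntegral_mono' hT fun z hz ↦ ENNReal.mul_rpow_sub_one_le_rpow hα (le_of_lt hz)
    _ ≤ ∫⁻ z, μ.rnDeriv ν z ^ α ∂ν := setLIntegral_le_lintegral _ _

lemma measure_inter_rnDeriv_le_le (hμν : μ ≪ ν) (c : ENNReal) {S : Set Z}
    (hS : MeasurableSet S) : μ (S ∩ {z | μ.rnDeriv ν z ≤ c}) ≤ c * ν S := by
  have hSc : MeasurableSet (S ∩ {z | μ.rnDeriv ν z ≤ c}) :=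
    hS.inter (measurable_rnDeriv μ ν measurableSet_Iic)
  calc μ (S ∩ {z | μ.rnDeriv ν z ≤ c})
      = ∫⁻ z in S ∩ {z | μ.rnDeriv ν z ≤ c}, μ.rnDeriv ν z ∂ν :=
        (setLIntegral_rnDeriv' hμν hSc).symm
    _ ≤ ∫⁻ _ in S ∩ {z | μ.rnDeriv ν z ≤ c}, c ∂ν := setLIntegral_mono' hSc fun _ hz ↦ hz.2
    _ ≤ c * ν S := by
        rw [setLIntegral_const]
        gcongr
        exact Set.inter_subset_left

lemma measure_le_mul_add_measure_rnDeriv_gt (hμν : μ ≪ ν) (c : ENNReal) {S : Set Z}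
    (hS : MeasurableSet S) : μ S ≤ c * ν S + μ {z | c < μ.rnDeriv ν z} := calc
  μ S ≤ μ (S ∩ {z | μ.rnDeriv ν z ≤ c}) + μ (S \ {z | μ.rnDeriv ν z ≤ c}) :=
    measure_le_inter_add_sdiff μ _ _
  _ ≤ c * ν S + μ {z | c < μ.rnDeriv ν z} := by
    gcongr
    · exact measure_inter_rnDeriv_le_le hμν c hS
    · exact fun z hz ↦ show c < μ.rnDeriv ν z from not_le.mp hz.2

end MeasureTheory.Measure

lemma Real.exp_add_div_rpow {a : ℝ} (ha : a ≠ 0) (x y : ℝ) :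
    Real.exp (x + y / a) ^ a = Real.exp (a * x + y) := by
  rw [← Real.exp_mul]
  congr 1
  field_simp

theorem rdp_to_dp_general {Z : Type*} [MeasurableSpace Z] (μ ν : Measure Z)
    [IsProbabilityMeasure μ] [IsProbabilityMeasure ν]
    {α ε δ : ℝ} (hα : 1 < α) (hδ₀ : 0 < δ)
    (h : renyiDiv α μ ν ≤ (ε : EReal)) :
    ∀ S : Set Z, MeasurableSet S →
      μ S ≤ ENNReal.ofReal (Real.exp (ε + Real.log (1 / δ) / (α - 1))) * ν S
        + ENNReal.ofReal δ := by
  intro S hS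
  have hμν := absolutelyContinuous_of_renyiDiv_ne_top (ne_top_of_le_ne_top (EReal.coe_ne_top ε) h)
  set c := Real.exp (ε + Real.log (1 / δ) / (α - 1))
  have hc : Real.exp ((α - 1) * ε) = δ * c ^ (α - 1) := by
    rw [Real.exp_add_div_rpow (by linarith), Real.exp_add, Real.exp_log (by positivity)]
    field_simp
  have hcpow_ne_zero : ENNReal.ofReal c ^ (α - 1) ≠ 0 := by positivity
  have hcpow_ne_top : ENNReal.ofReal c ^ (α - 1) ≠ ⊤ := by
    exact ENNReal.rpow_ne_top_of_nonneg (by linarith) ENNReal.ofReal_ne_top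
  have htail : μ {z | ENNReal.ofReal c < μ.rnDeriv ν z} ≤ ENNReal.ofReal δ := by
    rw [← ENNReal.mul_le_mul_iff_left hcpow_ne_zero hcpow_ne_top]
    calc _ ≤ ∫⁻ z, μ.rnDeriv ν z ^ α ∂ν := Measure.measure_rnDeriv_gt_mul_rpow_le hμν hα.le _
      _ ≤ ENNReal.ofReal (Real.exp ((α - 1) * ε)) :=
        lintegral_rnDeriv_rpow_le_of_renyiDiv_le hα h
      _ = ENNReal.ofReal δ * ENNReal.ofReal c ^ (α - 1) := by
        rw [hc, ENNReal.ofReal_mul hδ₀.le,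
          ENNReal.ofReal_rpow_of_nonneg (Real.exp_pos _).le (by linarith)]
  calc μ S ≤ ENNReal.ofReal c * ν S + μ {z | ENNReal.ofReal c < μ.rnDeriv ν z} :=
        Measure.measure_le_mul_add_measure_rnDeriv_gt hμν _ hS
    _ ≤ ENNReal.ofReal c * ν S + ENNReal.ofReal δ := by gcongr

theorem rdp_to_dp {Z : Type*} [MeasurableSpace Z] (μ ν : Measure Z)
    [IsProbabilityMeasure μ] [IsProbabilityMeasure ν]
    {α ε δ : ℝ} (hα : 1 < α) (hε : 0 ≤ ε) (hδ₀ : 0 < δ) (hδ₁ : δ < 1)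
    (h : renyiDiv α μ ν ≤ (ε : EReal)) :
    ∀ S : Set Z, MeasurableSet S →
      μ S ≤ ENNReal.ofReal (Real.exp (ε + Real.log (1 / δ) / (α - 1))) * ν S
        + ENNReal.ofReal δ :=
  rdp_to_dp_general μ ν hα hδ₀ h
end

section
/- Rényi divergence between two real Gaussian distributions of equal variance: for real numbers m₁, m₂, σ > 0 and α > 1, the Rényi divergence of order α between the Gaussian distribution on ℝ with mean m₁ and variance σ² and the Gaussian distribution on ℝ with mean m₂ and variance σ² equals α · (m₁ − m₂)² / (2σ²). -/
/-!
Writing `p_m` for the density of `N(m, v)`, the Radon–Nikodym derivative of `N(m₁, v)` with respect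
to `N(m₂, v)` is `p_{m₁} / p_{m₂}`. Completing the square in the exponent,
`p_{m₂} (p_{m₁} / p_{m₂})^α = exp (α (α - 1) (m₁ - m₂)² / (2v)) · p_{α m₁ + (1 - α) m₂}`,
so the Rényi integral is that exponential factor, and dividing its logarithm by `α - 1` gives
`α (m₁ - m₂)² / (2v)`.
-/

open MeasureTheory Classical

open ProbabilityTheory
open Real
open scoped ENNReal NNReal

lemma renyiDiv_of_lintegral_eq_ofReal_exp {Z : Type*} [MeasurableSpace Z] {α c : ℝ}
    {μ ν : Measure Z} (hμν : μ ≪ ν)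
    (h : ∫⁻ z, (μ.rnDeriv ν z) ^ α ∂ν = ENNReal.ofReal (rexp c)) :
    renyiDiv α μ ν = (((α - 1)⁻¹ * c : ℝ) : EReal) := by
  rw [renyiDiv, if_pos hμν, h, ENNReal.log_ofReal_of_pos (exp_pos c), Real.log_exp,
    EReal.coe_mul]

lemma lintegral_rnDeriv_rpow_withDensity {X : Type*} [MeasurableSpace X] {κ : Measure X}
    [SigmaFinite κ] {f g : X → ℝ≥0∞} (hf : Measurable f) (hg : Measurable g)
    [SigmaFinite (κ.withDensity f)] [SigmaFinite (κ.withDensity g)] (α : ℝ) :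
    ∫⁻ x, ((κ.withDensity f).rnDeriv (κ.withDensity g) x) ^ α ∂(κ.withDensity g)
      = ∫⁻ x, g x * (f x / g x) ^ α ∂κ := by
  have hg_ac : κ.withDensity g ≪ κ := withDensity_absolutelyContinuous κ g
  have h_ratio : (κ.withDensity f).rnDeriv (κ.withDensity g) =ᵐ[κ.withDensity g]
      fun x ↦ f x / g x := by
    filter_upwards [Measure.rnDeriv_eq_div (withDensity_absolutelyContinuous κ f) hg_ac,
      hg_ac (Measure.rnDeriv_withDensity κ hf), hg_ac (Measure.rnDeriv_withDensity κ hg)]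
      with x hx hfx hgx
    rw [hx, hfx, hgx]
  rw [lintegral_congr_ae (h_ratio.mono fun x hx ↦ by rw [hx]),
    lintegral_withDensity_eq_lintegral_mul _ hg
      (by fun_prop : Measurable fun x ↦ (f x / g x) ^ α)]
  rfl

lemma gaussianPDFReal_mul_div_rpow {v : ℝ≥0} (hv : v ≠ 0) (m₁ m₂ α x : ℝ) :
    gaussianPDFReal m₂ v x * (gaussianPDFReal m₁ v x / gaussianPDFReal m₂ v x) ^ α
      = rexp (α * (α - 1) * (m₁ - m₂) ^ 2 / (2 * v))
        * gaussianPDFReal (α * m₁ + (1 - α) * m₂) v x := by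
  have hv' : (v : ℝ) ≠ 0 := by exact_mod_cast hv
  simp only [gaussianPDFReal]
  set c : ℝ := (√(2 * π * v))⁻¹
  have hc : 0 < c := by positivity
  rw [mul_div_mul_left _ _ hc.ne', ← Real.exp_sub, ← Real.exp_mul, mul_assoc, ← Real.exp_add,
    mul_left_comm, ← Real.exp_add]
  congr 2
  field_simp
  ring

lemma lintegral_rnDeriv_rpow_gaussianReal {v : ℝ≥0} (hv : v ≠ 0) (m₁ m₂ α : ℝ) :
    ∫⁻ x, ((gaussianReal m₁ v).rnDeriv (gaussianReal m₂ v) x) ^ α ∂(gaussianReal m₂ v)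
      = ENNReal.ofReal (rexp (α * (α - 1) * (m₁ - m₂) ^ 2 / (2 * v))) := by
  have (m : ℝ) : SigmaFinite (volume.withDensity (gaussianPDF m v)) :=
    SigmaFinite.withDensity_of_ne_top' fun _ ↦ gaussianPDF_ne_top
  simp only [gaussianReal_of_var_ne_zero _ hv]
  rw [lintegral_rnDeriv_rpow_withDensity (measurable_gaussianPDF _ _)
    (measurable_gaussianPDF _ _)]
  have h_pointwise : ∀ x, gaussianPDF m₂ v x * (gaussianPDF m₁ v x / gaussianPDF m₂ v x) ^ α
      = ENNReal.ofReal (rexp (α * (α - 1) * (m₁ - m₂) ^ 2 / (2 * v)))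
        * gaussianPDF (α * m₁ + (1 - α) * m₂) v x := by
    intro x
    have hp₂ := gaussianPDFReal_pos m₂ v x hv
    rw [gaussianPDF, gaussianPDF, gaussianPDF, ← ENNReal.ofReal_div_of_pos hp₂,
      ENNReal.ofReal_rpow_of_pos (div_pos (gaussianPDFReal_pos m₁ v x hv) hp₂),
      ← ENNReal.ofReal_mul hp₂.le, gaussianPDFReal_mul_div_rpow hv,
      ENNReal.ofReal_mul (exp_pos _).le]
  simp_rw [h_pointwise]
  rw [lintegral_const_mul _ (measurable_gaussianPDF _ _), lintegral_gaussianPDF_eq_one _ hv,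
    mul_one]

lemma renyiDiv_gaussianReal_of_var_ne_zero {v : ℝ≥0} (hv : v ≠ 0) {α : ℝ} (hα : α ≠ 1)
    (m₁ m₂ : ℝ) :
    renyiDiv α (gaussianReal m₁ v) (gaussianReal m₂ v)
      = ((α * (m₁ - m₂) ^ 2 / (2 * v) : ℝ) : EReal) := by
  have hμν : gaussianReal m₁ v ≪ gaussianReal m₂ v :=
    (gaussianReal_absolutelyContinuous m₁ hv).trans (gaussianReal_absolutelyContinuous' m₂ hv)
  rw [renyiDiv_of_lintegral_eq_ofReal_exp hμν (lintegral_rnDeriv_rpow_gaussianReal hv m₁ m₂ α)]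
  have : α - 1 ≠ 0 := sub_ne_zero.mpr hα
  congr 1
  field_simp

theorem renyiDiv_gaussianReal {m₁ m₂ σ α : ℝ} (hσ : 0 < σ) (hα : 1 < α) :
    renyiDiv α (gaussianReal m₁ ((σ ^ 2).toNNReal) ) (gaussianReal m₂ ((σ ^ 2).toNNReal)) =
      ((α * (m₁ - m₂) ^ 2 / (2 * σ ^ 2) : ℝ) : EReal) := by
  have hv : (σ ^ 2).toNNReal ≠ 0 := by simpa using hσ.ne'
  rw [renyiDiv_gaussianReal_of_var_ne_zero hv hα.ne', Real.coe_toNNReal _ (sq_nonneg σ)]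
end

section
/- Rényi-differential-privacy guarantee of the multivariate Gaussian mechanism (the bound used for DP-PCA in the paper): let d be a positive natural number, σ > 0, α > 1, and let m, m′ ∈ ℝ^d with ∑_{i<d} (mᵢ − m′ᵢ)² ≤ 1 (i.e., ℓ₂-sensitivity at most 1). Let μ = ⊗_{i<d} N(mᵢ, σ²) and ν = ⊗_{i<d} N(m′ᵢ, σ²) be the product Gaussian measures on ℝ^d obtained by adding i.i.d. N(0, σ²) noise to each coordinate. Then D_α(μ ‖ ν) = α · ∑_{i<d} (mᵢ − m′ᵢ)² / (2σ²) ≤ α/(2σ²). -/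
open MeasureTheory Classical

open ProbabilityTheory

open scoped ENNReal NNReal

/-!
The Rényi integral `∫ (dμ/dν)^α dν` tensorizes: the density of a product measure with respect to
another is the product of the coordinate densities, so by Fubini the integral is the product of the
one-dimensional ones. For two Gaussians of common variance `v`, completing the square gives
`φ_b · (φ_a / φ_b)^α = exp (α (α - 1) (a - b)² / (2v)) · φ_{b + α (a - b)}`, so the one-dimensional
integral is `exp (α (α - 1) (a - b)² / (2v))`. Taking the logarithm and dividing by `α - 1` turns
the product over coordinates into `α ∑ (mᵢ - m'ᵢ)² / (2σ²)`.
-/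

namespace MeasureTheory

variable {ι α : Type*} [Fintype ι] [MeasurableSpace α]

theorem lintegral_fin_nat_prod_eq_prod {n : ℕ} (μ : Fin n → Measure α) [∀ i, SigmaFinite (μ i)]
    {f : Fin n → α → ℝ≥0∞} (hf : ∀ i, Measurable (f i)) :
    ∫⁻ x, ∏ i, f i (x i) ∂Measure.pi μ = ∏ i, ∫⁻ y, f i y ∂μ i := by
  induction n with
  | zero => simp
  | succ n ih =>
    calc
      _ = ∫⁻ x : α × (Fin n → α), f 0 x.1 * ∏ i : Fin n, f i.succ (x.2 i)
          ∂(μ 0).prod (Measure.pi fun i ↦ μ i.succ) := by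
        rw [← (measurePreserving_piFinSuccAbove μ 0).symm.lintegral_comp_emb
          (MeasurableEquiv.measurableEmbedding _)]
        simp_rw [MeasurableEquiv.piFinSuccAbove_symm_apply, Fin.insertNthEquiv,
          Fin.prod_univ_succ, Fin.insertNth_zero, Equiv.coe_fn_mk, Fin.cons_succ,
          Fin.zero_succAbove, cast_eq, Fin.cons_zero]
      _ = (∫⁻ y, f 0 y ∂μ 0) * ∏ i : Fin n, ∫⁻ y, f i.succ y ∂μ i.succ := by
        have hg : Measurable fun y : Fin n → α ↦ ∏ i, f i.succ (y i) :=
          Finset.measurable_prod _ fun i _ ↦ (hf i.succ).comp (measurable_pi_apply i)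
        rw [← ih _ fun i ↦ hf i.succ, lintegral_prod_mul (hf 0).aemeasurable hg.aemeasurable]
      _ = ∏ i, ∫⁻ y, f i y ∂μ i := by rw [Fin.prod_univ_succ]

theorem lintegral_fintype_prod_eq_prod (μ : ι → Measure α) [∀ i, SigmaFinite (μ i)]
    {f : ι → α → ℝ≥0∞} (hf : ∀ i, Measurable (f i)) :
    ∫⁻ x, ∏ i, f i (x i) ∂Measure.pi μ = ∏ i, ∫⁻ y, f i y ∂μ i := by
  let e := (Fintype.equivFin ι).symm
  rw [← (measurePreserving_piCongrLeft μ e).lintegral_comp_emb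
    (MeasurableEquiv.measurableEmbedding _)]
  simp_rw [← e.prod_comp, MeasurableEquiv.coe_piCongrLeft, Equiv.piCongrLeft_apply_apply]
  exact lintegral_fin_nat_prod_eq_prod _ fun i ↦ hf (e i)

theorem Measure.pi_withDensity (μ : ι → Measure α) [∀ i, SigmaFinite (μ i)]
    {f : ι → α → ℝ≥0∞} (hf : ∀ i, Measurable (f i))
    [∀ i, SigmaFinite ((μ i).withDensity (f i))] :
    Measure.pi (fun i ↦ (μ i).withDensity (f i))
      = (Measure.pi μ).withDensity fun x ↦ ∏ i, f i (x i) := by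
  refine Measure.pi_eq fun s hs ↦ ?_
  rw [withDensity_apply _ (MeasurableSet.univ_pi hs), Measure.restrict_pi_pi,
    lintegral_fintype_prod_eq_prod _ hf]
  exact Finset.prod_congr rfl fun i _ ↦ (withDensity_apply _ (hs i)).symm

theorem Measure.pi_eq_withDensity_prod_rnDeriv (μ ν : ι → Measure α) [∀ i, SigmaFinite (μ i)]
    [∀ i, SigmaFinite (ν i)] (hμν : ∀ i, μ i ≪ ν i) :
    Measure.pi μ = (Measure.pi ν).withDensity fun x ↦ ∏ i, (μ i).rnDeriv (ν i) (x i) := by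
  have := fun i ↦ SigmaFinite.withDensity_of_ne_top (Measure.rnDeriv_ne_top (μ i) (ν i))
  rw [← Measure.pi_withDensity ν fun i ↦ Measure.measurable_rnDeriv _ _]
  congr 1
  exact funext fun i ↦ (Measure.withDensity_rnDeriv_eq _ _ (hμν i)).symm

theorem Measure.AbsolutelyContinuous.pi {μ ν : ι → Measure α} [∀ i, SigmaFinite (μ i)]
    [∀ i, SigmaFinite (ν i)] (hμν : ∀ i, μ i ≪ ν i) : Measure.pi μ ≪ Measure.pi ν := by
  rw [Measure.pi_eq_withDensity_prod_rnDeriv μ ν hμν]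
  exact withDensity_absolutelyContinuous _ _

theorem lintegral_rnDeriv_pi_rpow (μ ν : ι → Measure α) [∀ i, SigmaFinite (μ i)]
    [∀ i, SigmaFinite (ν i)] (hμν : ∀ i, μ i ≪ ν i) {p : ℝ} (hp : 0 ≤ p) :
    ∫⁻ x, (Measure.pi μ).rnDeriv (Measure.pi ν) x ^ p ∂Measure.pi ν
      = ∏ i, ∫⁻ y, (μ i).rnDeriv (ν i) y ^ p ∂ν i := by
  have hrn : (Measure.pi μ).rnDeriv (Measure.pi ν) =ᵐ[Measure.pi ν]
      fun x ↦ ∏ i, (μ i).rnDeriv (ν i) (x i) := by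
    rw [Measure.pi_eq_withDensity_prod_rnDeriv μ ν hμν]
    exact Measure.rnDeriv_withDensity _ (by fun_prop)
  calc
    _ = ∫⁻ x, ∏ i, (μ i).rnDeriv (ν i) (x i) ^ p ∂Measure.pi ν :=
      lintegral_congr_ae <| by
        filter_upwards [hrn] with x hx
        rw [hx, ENNReal.prod_rpow_of_nonneg hp]
    _ = _ := lintegral_fintype_prod_eq_prod ν fun i ↦ (Measure.measurable_rnDeriv _ _).pow_const p

theorem lintegral_rnDeriv_withDensity_rpow (Λ : Measure α) [SigmaFinite Λ] {f g : α → ℝ≥0∞}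
    (hf : Measurable f) (hg : Measurable g) (hf_ne_top : ∀ᵐ x ∂Λ, f x ≠ ∞)
    (hg_ne_zero : ∀ᵐ x ∂Λ, g x ≠ 0) (hg_ne_top : ∀ᵐ x ∂Λ, g x ≠ ∞) (p : ℝ) :
    ∫⁻ x, (Λ.withDensity f).rnDeriv (Λ.withDensity g) x ^ p ∂Λ.withDensity g
      = ∫⁻ x, g x * ((g x)⁻¹ * f x) ^ p ∂Λ := by
  have := SigmaFinite.withDensity_of_ne_top hf_ne_top
  have hrn : (Λ.withDensity f).rnDeriv (Λ.withDensity g) =ᵐ[Λ] fun x ↦ (g x)⁻¹ * f x := by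
    filter_upwards [Measure.rnDeriv_withDensity_right (Λ.withDensity f) Λ hg.aemeasurable
      hg_ne_zero hg_ne_top, Measure.rnDeriv_withDensity Λ hf] with x hx hfx
    rw [hx, hfx]
  rw [lintegral_withDensity_eq_lintegral_mul₀ hg.aemeasurable
    ((Measure.measurable_rnDeriv _ _).pow_const p).aemeasurable]
  exact lintegral_congr_ae (by filter_upwards [hrn] with x hx; simp [hx])

end MeasureTheory

namespace ProbabilityTheory

variable {v : ℝ≥0}

lemma inv_gaussianPDFReal_mul_gaussianPDFReal (hv : v ≠ 0) (a b y : ℝ) :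
    (gaussianPDFReal b v y)⁻¹ * gaussianPDFReal a v y
      = Real.exp (((y - b) ^ 2 - (y - a) ^ 2) / (2 * v)) := by
  simp only [gaussianPDFReal]
  rw [mul_inv, mul_mul_mul_comm, inv_mul_cancel₀ (by positivity), one_mul, ← Real.exp_neg,
    ← Real.exp_add]
  ring_nf

lemma gaussianPDFReal_mul_inv_mul_rpow (hv : v ≠ 0) (a b α y : ℝ) :
    gaussianPDFReal b v y * ((gaussianPDFReal b v y)⁻¹ * gaussianPDFReal a v y) ^ α
      = Real.exp (α * (α - 1) * (a - b) ^ 2 / (2 * v)) * gaussianPDFReal (b + α * (a - b)) v y := by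
  rw [inv_gaussianPDFReal_mul_gaussianPDFReal hv, ← Real.exp_mul]
  simp only [gaussianPDFReal]
  rw [mul_assoc, ← Real.exp_add, mul_left_comm, ← Real.exp_add]
  congr 2
  have : (v : ℝ) ≠ 0 := by positivity
  field_simp
  ring

lemma gaussianPDF_mul_inv_mul_rpow (hv : v ≠ 0) (a b α y : ℝ) :
    gaussianPDF b v y * ((gaussianPDF b v y)⁻¹ * gaussianPDF a v y) ^ α
      = ENNReal.ofReal (Real.exp (α * (α - 1) * (a - b) ^ 2 / (2 * v)))
        * gaussianPDF (b + α * (a - b)) v y := by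
  have hb := gaussianPDFReal_pos b v y hv
  have ha := gaussianPDFReal_pos a v y hv
  simp only [gaussianPDF]
  rw [← ENNReal.ofReal_inv_of_pos hb, ← ENNReal.ofReal_mul (inv_nonneg.mpr hb.le),
    ENNReal.ofReal_rpow_of_pos (mul_pos (inv_pos.mpr hb) ha), ← ENNReal.ofReal_mul hb.le,
    gaussianPDFReal_mul_inv_mul_rpow hv, ENNReal.ofReal_mul (Real.exp_pos _).le]

lemma lintegral_rnDeriv_gaussianReal_rpow (hv : v ≠ 0) (a b α : ℝ) :
    ∫⁻ y, (gaussianReal a v).rnDeriv (gaussianReal b v) y ^ α ∂gaussianReal b v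
      = ENNReal.ofReal (Real.exp (α * (α - 1) * (a - b) ^ 2 / (2 * v))) := by
  simp only [gaussianReal_of_var_ne_zero _ hv]
  rw [lintegral_rnDeriv_withDensity_rpow volume (measurable_gaussianPDF _ _)
    (measurable_gaussianPDF _ _) (ae_of_all _ fun _ ↦ gaussianPDF_ne_top)
    (ae_of_all _ fun y ↦ (gaussianPDF_pos _ hv y).ne') (ae_of_all _ fun _ ↦ gaussianPDF_ne_top)]
  simp_rw [gaussianPDF_mul_inv_mul_rpow hv]
  rw [lintegral_const_mul' _ _ ENNReal.ofReal_ne_top, lintegral_gaussianPDF_eq_one _ hv, mul_one]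

lemma renyiDiv_pi_gaussianReal {ι : Type*} [Fintype ι] (hv : v ≠ 0) (a b : ι → ℝ) {α : ℝ}
    (hα₀ : 0 ≤ α) (hα₁ : α ≠ 1) :
    renyiDiv α (Measure.pi fun i ↦ gaussianReal (a i) v) (Measure.pi fun i ↦ gaussianReal (b i) v)
      = ((α * (∑ i, (a i - b i) ^ 2) / (2 * v) : ℝ) : EReal) := by
  have hac i : gaussianReal (a i) v ≪ gaussianReal (b i) v :=
    (gaussianReal_absolutelyContinuous _ hv).trans (gaussianReal_absolutelyContinuous' _ hv)
  rw [renyiDiv, if_pos (Measure.AbsolutelyContinuous.pi hac),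
    lintegral_rnDeriv_pi_rpow _ _ hac hα₀]
  simp_rw [lintegral_rnDeriv_gaussianReal_rpow hv]
  rw [← ENNReal.ofReal_prod_of_nonneg fun i _ ↦ (Real.exp_pos _).le, ← Real.exp_sum,
    ENNReal.log_ofReal_of_pos (Real.exp_pos _), Real.log_exp, ← EReal.coe_mul]
  congr 1
  have : α - 1 ≠ 0 := sub_ne_zero.mpr hα₁
  rw [← Finset.sum_div, ← Finset.mul_sum]
  field_simp

end ProbabilityTheory

theorem renyiDiv_gaussian_mechanism_general {d : ℕ} {σ α : ℝ}
    (hσ : 0 < σ) (hα : 1 < α) (m m' : Fin d → ℝ)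
    (hsens : ∑ i, (m i - m' i) ^ 2 ≤ 1) :
    renyiDiv α (Measure.pi fun i => gaussianReal (m i) ((σ ^ 2).toNNReal))
        (Measure.pi fun i => gaussianReal (m' i) ((σ ^ 2).toNNReal)) =
      ((α * (∑ i, (m i - m' i) ^ 2) / (2 * σ ^ 2) : ℝ) : EReal) ∧
    renyiDiv α (Measure.pi fun i => gaussianReal (m i) ((σ ^ 2).toNNReal))
        (Measure.pi fun i => gaussianReal (m' i) ((σ ^ 2).toNNReal)) ≤
      ((α / (2 * σ ^ 2) : ℝ) : EReal) := by
  have hv : (σ ^ 2).toNNReal ≠ 0 := by simpa using hσ.ne'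
  have hdiv := renyiDiv_pi_gaussianReal hv m m' (by linarith) hα.ne'
  rw [Real.coe_toNNReal _ (sq_nonneg σ)] at hdiv
  refine ⟨hdiv, hdiv ▸ EReal.coe_le_coe_iff.mpr ?_⟩
  gcongr
  exact mul_le_of_le_one_right (by linarith) hsens

theorem renyiDiv_gaussian_mechanism {d : ℕ} (hd : 0 < d) {σ α : ℝ}
    (hσ : 0 < σ) (hα : 1 < α) (m m' : Fin d → ℝ)
    (hsens : ∑ i, (m i - m' i) ^ 2 ≤ 1) :
    renyiDiv α (Measure.pi fun i => gaussianReal (m i) ((σ ^ 2).toNNReal))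
        (Measure.pi fun i => gaussianReal (m' i) ((σ ^ 2).toNNReal)) =
      ((α * (∑ i, (m i - m' i) ^ 2) / (2 * σ ^ 2) : ℝ) : EReal) ∧
    renyiDiv α (Measure.pi fun i => gaussianReal (m i) ((σ ^ 2).toNNReal))
        (Measure.pi fun i => gaussianReal (m' i) ((σ ^ 2).toNNReal)) ≤
      ((α / (2 * σ ^ 2) : ℝ) : EReal) :=
  renyiDiv_gaussian_mechanism_general hσ hα m m' hsens
end
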